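/- Suppose (R^{n_1}, B_{n_1}, J_{n_1}) and (R^{n_2}, B_{n_2}, J_{n_2}) are Hadamard triples. Then (R^{n_1+n_2}, B_{n_1+n_2}, J_{n_1} + (R^T)^{n_1} J_{n_2}) is a Hadamard triple, where B_{n_1+n_2} = B_{n_1} + R^{n_1} B_{n_2}. -/

import Mathlib

open scoped BigOperators ENNReal
open Matrix MeasureTheory

noncomputable section

/-- Cast of an integer matrix to a real matrix. -/
def mR {d : ℕ} (R : Matrix (Fin d) (Fin d) ℤ) : Matrix (Fin d) (Fin d) ℝ :=
  R.map (Int.cast : ℤ → ℝ)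

/-- Cast of an integer vector to a real vector. -/
def vR {d : ℕ} (b : Fin d → ℤ) : Fin d → ℝ := fun i => (b i : ℝ)

/-- The standard inner product on ℝ^d. -/
def ip {d : ℕ} (x y : Fin d → ℝ) : ℝ := ∑ i, x i * y i

/-- A matrix is expansive if all of its complex eigenvalues have modulus > 1. -/
def Expansive {d : ℕ} (R : Matrix (Fin d) (Fin d) ℤ) : Prop :=
  ∀ z ∈ spectrum ℂ (R.map (Int.cast : ℤ → ℂ)), 1 < ‖z‖

/-- The matrix H = (1/√N)[e^{2πi⟨S⁻¹ a, ℓ⟩}]_{ℓ ∈ L, a ∈ A}. -/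
def hMatrix {d : ℕ} (S : Matrix (Fin d) (Fin d) ℤ) (A L : Finset (Fin d → ℤ)) :
    Matrix L A ℂ := fun ℓ a =>
  ((1 / Real.sqrt (A.card) : ℝ) : ℂ) *
    Complex.exp (2 * (Real.pi : ℂ) * Complex.I *
      ((ip ((mR S)⁻¹.mulVec (vR (a : Fin d → ℤ))) (vR (ℓ : Fin d → ℤ)) : ℝ) : ℂ))

/-- (S, A, L) is a Hadamard triple: #A = #L and the matrix H is unitary (H* H = 1). -/
def IsHadamardTriple {d : ℕ} (S : Matrix (Fin d) (Fin d) ℤ) (A L : Finset (Fin d → ℤ)) : Prop :=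
  A.card = L.card ∧ (hMatrix S A L)ᴴ * hMatrix S A L = 1

/-- B is a simple digit set for R: distinct elements are incongruent mod R(ℤ^d). -/
def SimpleDigits {d : ℕ} (R : Matrix (Fin d) (Fin d) ℤ) (B : Finset (Fin d → ℤ)) : Prop :=
  ∀ b ∈ B, ∀ b' ∈ B, (∃ k : Fin d → ℤ, b - b' = R.mulVec k) → b = b'

/-- Bb is a complete set of representatives modulo R(ℤ^d). -/
def CompleteResidues {d : ℕ} (R : Matrix (Fin d) (Fin d) ℤ) (Bb : Finset (Fin d → ℤ)) : Prop :=
  SimpleDigits R Bb ∧ ∀ x : Fin d → ℤ, ∃ b ∈ Bb, ∃ k : Fin d → ℤ, x = b + R.mulVec k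

/-- B_k = B + RB + ⋯ + R^{k-1}B. -/
def Bk {d : ℕ} (R : Matrix (Fin d) (Fin d) ℤ) (B : Finset (Fin d → ℤ)) (k : ℕ) :
    Finset (Fin d → ℤ) :=
  (Fintype.piFinset (fun _ : Fin k => B)).image
    (fun b => ∑ j : Fin k, (R ^ (j : ℕ)).mulVec (b j))

/-- The element of B_n associated to a word b ∈ B^n. -/
def beta {d : ℕ} (R : Matrix (Fin d) (Fin d) ℤ) {n : ℕ} (b : Fin n → (Fin d → ℤ)) :
    Fin d → ℤ := ∑ j : Fin n, (R ^ (j : ℕ)).mulVec (b j)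

/-- τ_b(x) = R⁻¹(x + b). -/
def tau {d : ℕ} (R : Matrix (Fin d) (Fin d) ℤ) (b : Fin d → ℤ) (x : Fin d → ℝ) : Fin d → ℝ :=
  (mR R)⁻¹.mulVec (x + vR b)

/-- τ at level n: x ↦ R^{-n}(x + b); the composition τ_{b_1}∘⋯∘τ_{b_n} equals
`tauN R n (beta R b)` under the identification of words with digits in B_n. -/
def tauN {d : ℕ} (R : Matrix (Fin d) (Fin d) ℤ) (n : ℕ) (b : Fin d → ℤ) (x : Fin d → ℝ) :
    Fin d → ℝ := ((mR R) ^ n)⁻¹.mulVec (x + vR b)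

/-- T is the attractor T(R,B): the (unique) nonempty compact set with T = ⋃_b τ_b(T). -/
def IsAttractor {d : ℕ} (R : Matrix (Fin d) (Fin d) ℤ) (B : Finset (Fin d → ℤ))
    (T : Set (Fin d → ℝ)) : Prop :=
  T.Nonempty ∧ IsCompact T ∧ T = ⋃ b ∈ B, tau R b '' T

/-- μ is the equal-weight self-affine measure: μ = (1/N) Σ_b μ ∘ τ_b⁻¹. -/
def IsSelfAffine {d : ℕ} (R : Matrix (Fin d) (Fin d) ℤ) (B : Finset (Fin d → ℤ))
    (μ : Measure (Fin d → ℝ)) : Prop :=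
  μ = (B.card : ℝ≥0∞)⁻¹ • ∑ b ∈ B, μ.map (tau R b)

/-- The no-overlap condition. -/
def NoOverlap {d : ℕ} (R : Matrix (Fin d) (Fin d) ℤ) (B : Finset (Fin d → ℤ))
    (μ : Measure (Fin d → ℝ)) (T : Set (Fin d → ℝ)) : Prop :=
  ∀ b ∈ B, ∀ b' ∈ B, b ≠ b' → μ (tau R b '' T ∩ tau R b' '' T) = 0

/-- The Fourier transform μ̂(ξ) = ∫ e^{-2πi⟨ξ,x⟩} dμ(x). -/
def ft {d : ℕ} (μ : Measure (Fin d → ℝ)) (ξ : Fin d → ℝ) : ℂ :=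
  ∫ x, Complex.exp (-(2 * (Real.pi : ℂ) * Complex.I * ((ip ξ x : ℝ) : ℂ))) ∂μ

/-- M_B(ξ) = (1/N) Σ_{b∈B} e^{-2πi⟨b,ξ⟩}. -/
def maskB {d : ℕ} (B : Finset (Fin d → ℤ)) (ξ : Fin d → ℝ) : ℂ :=
  (B.card : ℂ)⁻¹ *
    ∑ b ∈ B, Complex.exp (-(2 * (Real.pi : ℂ) * Complex.I * ((ip (vR b) ξ : ℝ) : ℂ)))

/-- M_{B_n}(ξ) = (1/N^n) Σ_{b∈B_n} e^{-2πi⟨b,ξ⟩} (summed over words). -/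
def maskBn {d : ℕ} (R : Matrix (Fin d) (Fin d) ℤ) (B : Finset (Fin d → ℤ)) (n : ℕ)
    (ξ : Fin d → ℝ) : ℂ :=
  ((B.card : ℂ) ^ n)⁻¹ * ∑ b ∈ Fintype.piFinset (fun _ : Fin n => B),
    Complex.exp (-(2 * (Real.pi : ℂ) * Complex.I * ((ip (vR (beta R b)) ξ : ℝ) : ℂ)))

/-- u_B(x) = |(1/N) Σ_{b∈B} e^{2πi⟨b,x⟩}|². -/
def uB {d : ℕ} (B : Finset (Fin d → ℤ)) (x : Fin d → ℝ) : ℝ :=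
  ‖(B.card : ℂ)⁻¹ *
    ∑ b ∈ B, Complex.exp (2 * (Real.pi : ℂ) * Complex.I * ((ip (vR b) x : ℝ) : ℂ))‖ ^ 2

/-- Σ_{λ∈J} |N^{-n/2} Σ_{b∈B_n} w_b e^{-2πi⟨R^{-n}b,λ⟩}|². -/
def frameSum {d : ℕ} (R : Matrix (Fin d) (Fin d) ℤ) (B : Finset (Fin d → ℤ)) (n : ℕ)
    (J : Finset (Fin d → ℤ)) (w : (Fin d → ℤ) → ℂ) : ℝ :=
  ∑ lam ∈ J, ‖((1 / Real.sqrt ((B.card : ℝ) ^ n) : ℝ) : ℂ) *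
    ∑ b ∈ Bk R B n, w b * Complex.exp (-(2 * (Real.pi : ℂ) * Complex.I *
      ((ip (((mR R) ^ n)⁻¹.mulVec (vR b)) (vR lam) : ℝ) : ℂ)))‖ ^ 2

/-- The almost-Parseval-frame inequality at level n with constant ε and frequency set J. -/
def APF {d : ℕ} (R : Matrix (Fin d) (Fin d) ℤ) (B : Finset (Fin d → ℤ)) (n : ℕ)
    (J : Finset (Fin d → ℤ)) (ε : ℝ) : Prop :=
  ∀ w : (Fin d → ℤ) → ℂ,
    (1 - ε) * (∑ b ∈ Bk R B n, ‖w b‖ ^ 2) ≤ frameSum R B n J w ∧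
    frameSum R B n J w ≤ (1 + ε) * (∑ b ∈ Bk R B n, ‖w b‖ ^ 2)

/-!
Hadamard triples `(S₁, A₁, J₁)` and `(S₂, A₂, J₂)` concatenate to
`(S₂ S₁, A₂ + S₂ A₁, J₁ + S₁ᵀ J₂)`: for `a = a₂ + S₂ a₁` and `ℓ = ℓ₁ + S₁ᵀ ℓ₂`,
`⟨(S₂S₁)⁻¹ a, ℓ⟩ = ⟨(S₂S₁)⁻¹ a₂, ℓ₁⟩ + ⟨S₂⁻¹ a₂, ℓ₂⟩ + ⟨S₁⁻¹ a₁, ℓ₁⟩ + ⟨a₁, ℓ₂⟩`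
with an integer last term, so the inner product of two columns is a sum over `ℓ₁ ∈ J₁` times a
column inner product of the second triple. The latter vanishes unless `a₂ = a₂'`, and then the
former is a column inner product of the first triple.
Orthogonality of the columns (resp. rows, the matrix being square) makes the digits of a Hadamard
triple `(S, A, L)` incongruent modulo `S ℤ^d` (resp. the frequencies modulo `Sᵀ ℤ^d`), so both
sums of sets above are direct and have the right sizes. The theorem is the case `S₁ = R^{n₁}`,
`S₂ = R^{n₂}`, since `B_{n₁+n₂} = B_{n₂} + R^{n₂} B_{n₁}`.
-/

open Complex Finset

section Casts

variable {d : ℕ}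

lemma vR_add (x y : Fin d → ℤ) : vR (x + y) = vR x + vR y := by
  ext i; simp [vR]

lemma vR_sub (x y : Fin d → ℤ) : vR (x - y) = vR x - vR y := by
  ext i; simp [vR]

lemma vR_mulVec (M : Matrix (Fin d) (Fin d) ℤ) (x : Fin d → ℤ) :
    vR (M *ᵥ x) = mR M *ᵥ vR x := by
  ext i; simp [vR, mR, mulVec, dotProduct]

lemma vR_dotProduct_vR (x y : Fin d → ℤ) : vR x ⬝ᵥ vR y = ((x ⬝ᵥ y : ℤ) : ℝ) := by
  simp [vR, dotProduct]

lemma mR_mul (M N : Matrix (Fin d) (Fin d) ℤ) : mR (M * N) = mR M * mR N :=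
  Matrix.map_mul (f := Int.castRingHom ℝ)

lemma mR_transpose (M : Matrix (Fin d) (Fin d) ℤ) : mR Mᵀ = (mR M)ᵀ := rfl

lemma isUnit_det_mR {M : Matrix (Fin d) (Fin d) ℤ} (hM : M.det ≠ 0) : IsUnit (mR M).det := by
  rw [mR, ← Int.cast_det]
  exact isUnit_iff_ne_zero.mpr (Int.cast_ne_zero.mpr hM)

lemma Expansive.det_ne_zero {R : Matrix (Fin d) (Fin d) ℤ} (hR : Expansive R) : R.det ≠ 0 := by
  have hunit : IsUnit (R.map (Int.cast : ℤ → ℂ)) := by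
    by_contra h
    exact (hR 0 ((spectrum.zero_mem_iff ℂ).mpr h)).not_ge (by simp)
  rw [Matrix.isUnit_iff_isUnit_det, ← Int.cast_det, isUnit_iff_ne_zero] at hunit
  exact_mod_cast hunit

end Casts

def expTwoPiI (x : ℝ) : ℂ := exp (2 * Real.pi * I * x)

lemma expTwoPiI_add (x y : ℝ) : expTwoPiI (x + y) = expTwoPiI x * expTwoPiI y := by
  simp only [expTwoPiI, ← exp_add]
  push_cast
  ring_nf

@[simp]
lemma expTwoPiI_zero : expTwoPiI 0 = 1 := by simp [expTwoPiI]

lemma expTwoPiI_intCast (m : ℤ) : expTwoPiI m = 1 := by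
  rw [expTwoPiI, ← exp_int_mul_two_pi_mul_I m]
  push_cast
  ring_nf

lemma star_expTwoPiI (x : ℝ) : star (expTwoPiI x) = expTwoPiI (-x) := by
  rw [expTwoPiI, expTwoPiI, star_def, ← exp_conj]
  simp [map_ofNat]

section Phase

variable {d : ℕ}

def phase (S : Matrix (Fin d) (Fin d) ℤ) (a ℓ : Fin d → ℤ) : ℝ :=
  ip ((mR S)⁻¹ *ᵥ vR a) (vR ℓ)

lemma hMatrix_apply (S : Matrix (Fin d) (Fin d) ℤ) (A L : Finset (Fin d → ℤ)) (ℓ : L) (a : A) :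
    hMatrix S A L ℓ a = ((1 / √(#A : ℝ) : ℝ) : ℂ) * expTwoPiI (phase S a ℓ) :=
  rfl

lemma phase_sub_left (S : Matrix (Fin d) (Fin d) ℤ) (a a' ℓ : Fin d → ℤ) :
    phase S a' ℓ - phase S a ℓ = phase S (a' - a) ℓ := by
  simp only [phase, ip, vR_sub, mulVec_sub, Pi.sub_apply, sub_mul, sum_sub_distrib]

lemma phase_sub_right (S : Matrix (Fin d) (Fin d) ℤ) (a ℓ ℓ' : Fin d → ℤ) :
    phase S a ℓ - phase S a ℓ' = phase S a (ℓ - ℓ') := by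
  simp only [phase, ip, vR_sub, Pi.sub_apply, mul_sub, sum_sub_distrib]

lemma phase_mulVec_left {S : Matrix (Fin d) (Fin d) ℤ} (hS : S.det ≠ 0) (k ℓ : Fin d → ℤ) :
    phase S (S *ᵥ k) ℓ = ((k ⬝ᵥ ℓ : ℤ) : ℝ) := by
  rw [phase, ip, vR_mulVec, mulVec_mulVec, nonsing_inv_mul _ (isUnit_det_mR hS), one_mulVec,
    ← vR_dotProduct_vR, dotProduct]

lemma phase_transpose_mulVec_right {S : Matrix (Fin d) (Fin d) ℤ} (hS : S.det ≠ 0)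
    (a k : Fin d → ℤ) : phase S a (Sᵀ *ᵥ k) = ((a ⬝ᵥ k : ℤ) : ℝ) := by
  rw [phase, ip, vR_mulVec, mR_transpose, ← dotProduct, dotProduct_mulVec, vecMul_transpose,
    mulVec_mulVec, mul_nonsing_inv _ (isUnit_det_mR hS), one_mulVec, vR_dotProduct_vR]

lemma star_mul_expTwoPiI (n : ℕ) (x y : ℝ) :
    star (((1 / √(n : ℝ) : ℝ) : ℂ) * expTwoPiI x) * (((1 / √(n : ℝ) : ℝ) : ℂ) * expTwoPiI y)
      = (n : ℂ)⁻¹ * expTwoPiI (y - x) := by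
  have hc : ((1 / √(n : ℝ) : ℝ) : ℂ) * ((1 / √(n : ℝ) : ℝ) : ℂ) = (n : ℂ)⁻¹ := by
    rw [← ofReal_mul, div_mul_div_comm, one_mul, Real.mul_self_sqrt (Nat.cast_nonneg n), one_div]
    push_cast
    rfl
  rw [star_mul', star_expTwoPiI, star_def, conj_ofReal, sub_eq_add_neg, expTwoPiI_add, ← hc]
  ring

lemma conjTranspose_hMatrix_mul_apply (S : Matrix (Fin d) (Fin d) ℤ) (A L : Finset (Fin d → ℤ))
    (a a' : A) :
    ((hMatrix S A L)ᴴ * hMatrix S A L) a a'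
      = (#A : ℂ)⁻¹ * ∑ ℓ ∈ L, expTwoPiI (phase S a' ℓ - phase S a ℓ) := by
  simp only [mul_apply, conjTranspose_apply, hMatrix_apply, star_mul_expTwoPiI, ← mul_sum]
  rw [sum_coe_sort L (fun ℓ => expTwoPiI (phase S a' ℓ - phase S a ℓ))]

lemma hMatrix_mul_conjTranspose_apply (S : Matrix (Fin d) (Fin d) ℤ) (A L : Finset (Fin d → ℤ))
    (ℓ ℓ' : L) :
    (hMatrix S A L * (hMatrix S A L)ᴴ) ℓ ℓ'
      = (#A : ℂ)⁻¹ * ∑ a ∈ A, expTwoPiI (phase S a ℓ - phase S a ℓ') := by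
  simp_rw [mul_apply, conjTranspose_apply, mul_comm (hMatrix S A L ℓ _), hMatrix_apply,
    star_mul_expTwoPiI, ← mul_sum]
  rw [sum_coe_sort A (fun a => expTwoPiI (phase S a ℓ - phase S a ℓ'))]

end Phase

section HadamardTriple

variable {d : ℕ} {S : Matrix (Fin d) (Fin d) ℤ} {A L : Finset (Fin d → ℤ)}

theorem isHadamardTriple_iff :
    IsHadamardTriple S A L ↔ #A = #L ∧ ∀ a ∈ A, ∀ a' ∈ A, a ≠ a' →
      ∑ ℓ ∈ L, expTwoPiI (phase S a' ℓ - phase S a ℓ) = 0 := by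
  refine and_congr_right fun hcard => ?_
  rw [← Matrix.ext_iff]
  simp only [conjTranspose_hMatrix_mul_apply, Subtype.forall, one_apply, Subtype.mk.injEq]
  refine forall₂_congr fun a ha => forall₂_congr fun a' ha' => ?_
  have hA : (#A : ℂ) ≠ 0 := Nat.cast_ne_zero.mpr (card_ne_zero_of_mem ha)
  split_ifs with h
  · subst h
    simp [← hcard, hA]
  · simp [h, hA]

lemma IsHadamardTriple.sum_col_eq_zero (h : IsHadamardTriple S A L) {a a' : Fin d → ℤ}
    (ha : a ∈ A) (ha' : a' ∈ A) (hne : a ≠ a') :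
    ∑ ℓ ∈ L, expTwoPiI (phase S a' ℓ - phase S a ℓ) = 0 :=
  (isHadamardTriple_iff.mp h).2 a ha a' ha' hne

lemma IsHadamardTriple.sum_row_eq_zero (h : IsHadamardTriple S A L) {ℓ ℓ' : Fin d → ℤ}
    (hℓ : ℓ ∈ L) (hℓ' : ℓ' ∈ L) (hne : ℓ ≠ ℓ') :
    ∑ a ∈ A, expTwoPiI (phase S a ℓ - phase S a ℓ') = 0 := by
  have hrows : hMatrix S A L * (hMatrix S A L)ᴴ = 1 :=
    (mul_eq_one_comm_of_equiv (Fintype.equivOfCardEq (by simp [h.1]))).mp h.2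
  have hentry := congr_fun₂ hrows ⟨ℓ, hℓ⟩ ⟨ℓ', hℓ'⟩
  rw [hMatrix_mul_conjTranspose_apply, one_apply_ne (by simpa using hne)] at hentry
  have hA : (#A : ℂ) ≠ 0 := Nat.cast_ne_zero.mpr (h.1 ▸ card_ne_zero_of_mem hℓ)
  exact (mul_eq_zero.mp hentry).resolve_left (inv_ne_zero hA)

lemma IsHadamardTriple.simpleDigits (h : IsHadamardTriple S A L) (hS : S.det ≠ 0) :
    SimpleDigits S A := by
  rintro a ha a' ha' ⟨k, hk⟩
  by_contra hne
  have hsum := h.sum_col_eq_zero ha' ha (Ne.symm hne)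
  simp only [phase_sub_left, hk, phase_mulVec_left hS, expTwoPiI_intCast, sum_const,
    nsmul_eq_mul, mul_one, Nat.cast_eq_zero] at hsum
  exact card_ne_zero_of_mem ha (h.1.trans hsum)

lemma IsHadamardTriple.simpleDigits_transpose (h : IsHadamardTriple S A L) (hS : S.det ≠ 0) :
    SimpleDigits Sᵀ L := by
  rintro ℓ hℓ ℓ' hℓ' ⟨k, hk⟩
  by_contra hne
  have hsum := h.sum_row_eq_zero hℓ hℓ' hne
  simp only [phase_sub_right, hk, phase_transpose_mulVec_right hS, expTwoPiI_intCast, sum_const,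
    nsmul_eq_mul, mul_one, Nat.cast_eq_zero] at hsum
  exact card_ne_zero_of_mem hℓ (h.1.symm.trans hsum)

end HadamardTriple

lemma SimpleDigits.injOn_add_mulVec {d : ℕ} {M : Matrix (Fin d) (Fin d) ℤ}
    {X : Finset (Fin d → ℤ)} (hX : SimpleDigits M X) (hM : M.det ≠ 0) (Y : Finset (Fin d → ℤ)) :
    Set.InjOn (fun p : (Fin d → ℤ) × (Fin d → ℤ) => p.1 + M *ᵥ p.2) (X ×ˢ Y : Finset _) := by
  rintro ⟨x, y⟩ hp ⟨x', y'⟩ hp' heq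
  simp only [coe_product, Set.mem_prod, mem_coe] at hp hp' heq
  obtain rfl : x = x' :=
    hX x hp.1 x' hp'.1 ⟨y' - y, by rw [mulVec_sub, sub_eq_sub_iff_add_eq_add, heq, add_comm]⟩
  have hy : M *ᵥ (y - y') = 0 := by rw [mulVec_sub, sub_eq_zero]; exact add_left_cancel heq
  rw [sub_eq_zero.mp (eq_zero_of_mulVec_eq_zero hM hy)]

section Concat

variable {d : ℕ} {S₁ S₂ : Matrix (Fin d) (Fin d) ℤ}

lemma phase_add_left (S : Matrix (Fin d) (Fin d) ℤ) (a a' ℓ : Fin d → ℤ) :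
    phase S (a + a') ℓ = phase S a ℓ + phase S a' ℓ := by
  simp only [phase, ip, vR_add, mulVec_add, Pi.add_apply, add_mul, sum_add_distrib]

lemma phase_add_right (S : Matrix (Fin d) (Fin d) ℤ) (a ℓ ℓ' : Fin d → ℤ) :
    phase S a (ℓ + ℓ') = phase S a ℓ + phase S a ℓ' := by
  simp only [phase, ip, vR_add, Pi.add_apply, mul_add, sum_add_distrib]

lemma phase_mul_mulVec_left (hS₂ : S₂.det ≠ 0) (b ℓ : Fin d → ℤ) :
    phase (S₂ * S₁) (S₂ *ᵥ b) ℓ = phase S₁ b ℓ := by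
  rw [phase, phase, vR_mulVec, mulVec_mulVec, mR_mul, Matrix.mul_inv_rev, mul_assoc,
    nonsing_inv_mul _ (isUnit_det_mR hS₂), mul_one]

lemma phase_mul_transpose_mulVec_right (hS₁ : S₁.det ≠ 0) (a ℓ : Fin d → ℤ) :
    phase (S₂ * S₁) a (S₁ᵀ *ᵥ ℓ) = phase S₂ a ℓ := by
  rw [phase, phase, ip, ip, vR_mulVec, mR_transpose, ← dotProduct, ← dotProduct,
    dotProduct_mulVec, vecMul_transpose, mulVec_mulVec, mR_mul, Matrix.mul_inv_rev, ← mul_assoc,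
    mul_nonsing_inv _ (isUnit_det_mR hS₁), one_mul]

lemma phase_mul_add (hS₁ : S₁.det ≠ 0) (hS₂ : S₂.det ≠ 0) (a b ℓ ℓ' : Fin d → ℤ) :
    phase (S₂ * S₁) (a + S₂ *ᵥ b) (ℓ + S₁ᵀ *ᵥ ℓ')
      = phase (S₂ * S₁) a ℓ + phase S₂ a ℓ' + phase S₁ b ℓ + ((b ⬝ᵥ ℓ' : ℤ) : ℝ) := by
  rw [phase_add_left, phase_add_right, phase_add_right, phase_mul_transpose_mulVec_right hS₁,
    phase_mul_mulVec_left hS₂, phase_mul_mulVec_left hS₂, phase_transpose_mulVec_right hS₁]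
  ring

lemma expTwoPiI_phase_mul_add_sub (hS₁ : S₁.det ≠ 0) (hS₂ : S₂.det ≠ 0)
    (a b a' b' ℓ ℓ' : Fin d → ℤ) :
    expTwoPiI (phase (S₂ * S₁) (a' + S₂ *ᵥ b') (ℓ + S₁ᵀ *ᵥ ℓ')
        - phase (S₂ * S₁) (a + S₂ *ᵥ b) (ℓ + S₁ᵀ *ᵥ ℓ'))
      = expTwoPiI (phase (S₂ * S₁) a' ℓ - phase (S₂ * S₁) a ℓ + (phase S₁ b' ℓ - phase S₁ b ℓ))
        * expTwoPiI (phase S₂ a' ℓ' - phase S₂ a ℓ') := by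
  rw [phase_mul_add hS₁ hS₂, phase_mul_add hS₁ hS₂, ← expTwoPiI_add,
    ← mul_one (expTwoPiI (_ + _)), ← expTwoPiI_intCast (b' ⬝ᵥ ℓ' - b ⬝ᵥ ℓ'), ← expTwoPiI_add]
  congr 1
  push_cast
  ring

theorem IsHadamardTriple.concat {A₁ A₂ J₁ J₂ : Finset (Fin d → ℤ)} (hS₁ : S₁.det ≠ 0)
    (hS₂ : S₂.det ≠ 0) (h₁ : IsHadamardTriple S₁ A₁ J₁) (h₂ : IsHadamardTriple S₂ A₂ J₂) :
    IsHadamardTriple (S₂ * S₁) ((A₂ ×ˢ A₁).image fun p => p.1 + S₂ *ᵥ p.2)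
      ((J₁ ×ˢ J₂).image fun q => q.1 + S₁ᵀ *ᵥ q.2) := by
  have hg := (h₂.simpleDigits hS₂).injOn_add_mulVec hS₂ A₁
  have hf := (h₁.simpleDigits_transpose hS₁).injOn_add_mulVec (by rwa [det_transpose]) J₂
  rw [isHadamardTriple_iff, card_image_of_injOn hg, card_image_of_injOn hf, card_product,
    card_product, h₁.1, h₂.1, mul_comm]
  refine ⟨rfl, ?_⟩
  simp only [forall_mem_image, mem_product, Prod.forall]
  rintro a b ⟨ha, hb⟩ a' b' ⟨ha', hb'⟩ hne
  rw [sum_image hf, sum_product]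
  simp_rw [expTwoPiI_phase_mul_add_sub hS₁ hS₂]
  rw [← sum_mul_sum]
  obtain rfl | ha_ne := eq_or_ne a a'
  · have hb_ne : b ≠ b' := fun hbb => hne (by rw [hbb])
    simp only [sub_self, zero_add]
    rw [h₁.sum_col_eq_zero hb hb' hb_ne, zero_mul]
  · rw [h₂.sum_col_eq_zero ha ha' ha_ne, mul_zero]

end Concat

section Digits

variable {d : ℕ} (R : Matrix (Fin d) (Fin d) ℤ)

lemma beta_append {m k : ℕ} (b₁ : Fin m → Fin d → ℤ) (b₂ : Fin k → Fin d → ℤ) :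
    beta R (Fin.append b₁ b₂) = beta R b₁ + R ^ m *ᵥ beta R b₂ := by
  simp only [beta, Fin.sum_univ_add, Fin.append_left, Fin.append_right, Fin.val_castAdd,
    Fin.val_natAdd, pow_add, ← mulVec_mulVec, mulVec_sum]

lemma Bk_eq_image_beta (B : Finset (Fin d → ℤ)) (k : ℕ) :
    Bk R B k = (Fintype.piFinset fun _ : Fin k => B).image (beta R) :=
  rfl

lemma Bk_add (B : Finset (Fin d → ℤ)) (m k : ℕ) :
    Bk R B (m + k) = (Bk R B m ×ˢ Bk R B k).image fun p => p.1 + R ^ m *ᵥ p.2 := by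
  ext x
  simp only [Bk_eq_image_beta, mem_image, mem_product, Fintype.mem_piFinset, Prod.exists]
  constructor
  · rintro ⟨b, hb, rfl⟩
    refine ⟨_, _, ⟨⟨_, fun i => hb (Fin.castAdd k i), rfl⟩,
      ⟨_, fun i => hb (Fin.natAdd m i), rfl⟩⟩, ?_⟩
    rw [← beta_append, Fin.append_castAdd_natAdd]
  · rintro ⟨_, _, ⟨⟨b₁, hb₁, rfl⟩, ⟨b₂, hb₂, rfl⟩⟩, rfl⟩
    exact ⟨Fin.append b₁ b₂, Fin.addCases (by simpa using hb₁) (by simpa using hb₂),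
      beta_append R b₁ b₂⟩

end Digits

/-- concatenation of Hadamard triples. -/
theorem hadamard_triple_concat {d : ℕ} (R : Matrix (Fin d) (Fin d) ℤ)
    (hR : Expansive R) (B J1 J2 : Finset (Fin d → ℤ)) (n1 n2 : ℕ)
    (h1 : IsHadamardTriple (R ^ n1) (Bk R B n1) J1)
    (h2 : IsHadamardTriple (R ^ n2) (Bk R B n2) J2) :
    IsHadamardTriple (R ^ (n1 + n2)) (Bk R B (n1 + n2))
      ((J1 ×ˢ J2).image (fun p => p.1 + (Rᵀ ^ n1).mulVec p.2)) := by
  have hdet : ∀ n, (R ^ n).det ≠ 0 := fun n => det_pow R n ▸ pow_ne_zero n hR.det_ne_zero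
  have h := h1.concat (hdet n1) (hdet n2) h2
  rwa [← pow_add, transpose_pow, ← Bk_add, Nat.add_comm n2 n1] at h
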